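/- arXiv:1103.3770 — 2 statements merged into one kernel-verified Lean document; each statement's English description precedes it below -/
import Mathlib

section
/- Let γ be an open operation on a topological space X. Then for every subset A of X, scl_γ*(scl_γ*(A)) = scl_γ*(A). -/
open Set

/-- An operation on a topological space: `V ⊆ γ V` for every open `V`. -/
def OperationOn {X : Type*} [TopologicalSpace X] (γ : Set X → Set X) : Prop :=
  ∀ V : Set X, IsOpen V → V ⊆ γ V

/-- The γ-interior of a set. -/
def gInt {X : Type*} [TopologicalSpace X] (γ : Set X → Set X) (A : Set X) : Set X :=
  {x | x ∈ A ∧ ∃ N : Set X, IsOpen N ∧ x ∈ N ∧ γ N ⊆ A}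

/-- A set is γ-open iff it equals its γ-interior. -/
def GOpen {X : Type*} [TopologicalSpace X] (γ : Set X → Set X) (A : Set X) : Prop :=
  A = gInt γ A

/-- A set is γ-closed iff its complement is γ-open. -/
def GClosed {X : Type*} [TopologicalSpace X] (γ : Set X → Set X) (A : Set X) : Prop :=
  GOpen γ Aᶜ

/-- The γ-closure of a set. -/
def gCl {X : Type*} [TopologicalSpace X] (γ : Set X → Set X) (A : Set X) : Set X :=
  {x | ∀ U : Set X, IsOpen U → x ∈ U → (γ U ∩ A).Nonempty}

/-- The γ-boundary of a set. -/
def gBd {X : Type*} [TopologicalSpace X] (γ : Set X → Set X) (A : Set X) : Set X :=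
  gCl γ A ∩ gCl γ Aᶜ

/-- A set is γ*-semi-open iff there is a γ-open `O` with `O ⊆ A ⊆ gCl γ O`. -/
def GSemiOpen {X : Type*} [TopologicalSpace X] (γ : Set X → Set X) (A : Set X) : Prop :=
  ∃ O : Set X, GOpen γ O ∧ O ⊆ A ∧ A ⊆ gCl γ O

/-- A set is γ*-semi-closed iff its complement is γ*-semi-open. -/
def GSemiClosed {X : Type*} [TopologicalSpace X] (γ : Set X → Set X) (A : Set X) : Prop :=
  GSemiOpen γ Aᶜ

/-- The γ*-semi-closure: intersection of all γ*-semi-closed sets containing `A`. -/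
def sCl {X : Type*} [TopologicalSpace X] (γ : Set X → Set X) (A : Set X) : Set X :=
  ⋂₀ {F : Set X | GSemiClosed γ F ∧ A ⊆ F}

/-- The γ*-semi-interior: union of all γ*-semi-open sets contained in `A`. -/
def sInt {X : Type*} [TopologicalSpace X] (γ : Set X → Set X) (A : Set X) : Set X :=
  ⋃₀ {O : Set X | GSemiOpen γ O ∧ O ⊆ A}

/-- The γ*-semi-boundary. -/
def sBd {X : Type*} [TopologicalSpace X] (γ : Set X → Set X) (A : Set X) : Set X :=
  sCl γ A ∩ sCl γ Aᶜ

/-- The γ*-semi-exterior. -/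
def sExt {X : Type*} [TopologicalSpace X] (γ : Set X → Set X) (A : Set X) : Set X :=
  sInt γ Aᶜ

/-- γ is a regular operation. -/
def RegularOp {X : Type*} [TopologicalSpace X] (γ : Set X → Set X) : Prop :=
  ∀ (x : X) (U V : Set X), IsOpen U → IsOpen V → x ∈ U → x ∈ V →
    ∃ W : Set X, IsOpen W ∧ x ∈ W ∧ γ W ⊆ γ U ∩ γ V

/-- γ is an open operation. -/
def OpenOp {X : Type*} [TopologicalSpace X] (γ : Set X → Set X) : Prop :=
  ∀ (x : X) (U : Set X), IsOpen U → x ∈ U →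
    ∃ B : Set X, GOpen γ B ∧ x ∈ B ∧ B ⊆ γ U

/-- A set is semi-open in the sense of Levine. -/
def SemiOpenL {X : Type*} [TopologicalSpace X] (S : Set X) : Prop :=
  ∃ O : Set X, IsOpen O ∧ O ⊆ S ∧ S ⊆ closure O

/-- γ is a semi-regular operation. -/
def SemiRegularOp {X : Type*} [TopologicalSpace X] (γ : Set X → Set X) : Prop :=
  ∀ (x : X) (U V : Set X), SemiOpenL U → SemiOpenL V → x ∈ U → x ∈ V →
    ∃ W : Set X, SemiOpenL W ∧ x ∈ W ∧ γ W ⊆ γ U ∩ γ V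

/-- `f` is γ-semi-continuous: preimages of γ-open sets are γ*-semi-open. -/
def GSemiContinuous {X Y : Type*} [TopologicalSpace X] [TopologicalSpace Y]
    (γX : Set X → Set X) (γY : Set Y → Set Y) (f : X → Y) : Prop :=
  ∀ B : Set Y, GOpen γY B → GSemiOpen γX (f ⁻¹' B)

/-- `f` is γ-semi-open: images of γ-open sets are γ*-semi-open. -/
def GSemiOpenMap {X Y : Type*} [TopologicalSpace X] [TopologicalSpace Y]
    (γX : Set X → Set X) (γY : Set Y → Set Y) (f : X → Y) : Prop :=
  ∀ U : Set X, GOpen γX U → GSemiOpen γY (f '' U)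


lemma gOpen_iUnion' {X : Type*} [TopologicalSpace X] (γ : Set X → Set X)
    {ι : Sort*} (s : ι → Set X) (h : ∀ i, GOpen γ (s i)) : GOpen γ (⋃ i, s i) := by
  apply Set.Subset.antisymm
  · intro x hx
    obtain ⟨i, hi⟩ := Set.mem_iUnion.mp hx
    have hx' : x ∈ gInt γ (s i) := (h i) ▸ hi
    obtain ⟨_, N, hN, hxN, hγN⟩ := hx'
    exact ⟨hx, N, hN, hxN, hγN.trans (Set.subset_iUnion s i)⟩
  · intro x hx; exact hx.1

lemma gCl_mono' {X : Type*} [TopologicalSpace X] (γ : Set X → Set X)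
    {A B : Set X} (h : A ⊆ B) : gCl γ A ⊆ gCl γ B := by
  intro x hx U hU hxU
  obtain ⟨y, hy1, hy2⟩ := hx U hU hxU
  exact ⟨y, hy1, h hy2⟩

lemma gSemiOpen_iUnion' {X : Type*} [TopologicalSpace X] (γ : Set X → Set X)
    {ι : Sort*} (s : ι → Set X) (h : ∀ i, GSemiOpen γ (s i)) : GSemiOpen γ (⋃ i, s i) := by
  choose O hO1 hO2 hO3 using h
  refine ⟨⋃ i, O i, gOpen_iUnion' γ O hO1, Set.iUnion_mono hO2, ?_⟩
  intro x hx
  obtain ⟨i, hi⟩ := Set.mem_iUnion.mp hx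
  exact gCl_mono' γ (Set.subset_iUnion O i) (hO3 i hi)

lemma gSemiClosed_sCl {X : Type*} [TopologicalSpace X] (γ : Set X → Set X)
    (A : Set X) : GSemiClosed γ (sCl γ A) := by
  unfold GSemiClosed sCl
  have : (⋂₀ {F : Set X | GSemiClosed γ F ∧ A ⊆ F})ᶜ
      = ⋃ F : {F : Set X // GSemiClosed γ F ∧ A ⊆ F}, (F : Set X)ᶜ := by
    ext x
    simp only [Set.mem_compl_iff, Set.mem_sInter, Set.mem_iUnion, not_forall]
    constructor
    · rintro ⟨F, hF, hx⟩; exact ⟨⟨F, hF.1, hF.2⟩, hx⟩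
    · rintro ⟨⟨F, hF⟩, hx⟩; exact ⟨F, hF, hx⟩
  rw [this]
  exact gSemiOpen_iUnion' γ _ (fun F => F.2.1)

theorem stmt1 {X : Type*} [TopologicalSpace X] (gamma : Set X -> Set X)
    (hop : OperationOn gamma) (hopen : OpenOp gamma) :
    forall A : Set X, sCl gamma (sCl gamma A) = sCl gamma A := by
  intro A
  apply Set.Subset.antisymm
  · exact Set.sInter_subset_of_mem ⟨gSemiClosed_sCl gamma A, Set.Subset.rfl⟩
  · intro x hx F hF
    exact hF.2 hx
end

section
/- Let X and Y be topological spaces with operations γ_X on X and γ_Y on Y, where γ_X is regular, and let f : X → Y be a function. Then f is γ-semi-continuous if and only if for each x ∈ X and each γ_Y-open set B containing f(x), there exists a γ_X*-semi-open set A with x ∈ A and f(A) ⊆ B. -/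
open Set

theorem stmt14 {X Y : Type*} [TopologicalSpace X] [TopologicalSpace Y]
    (gammaX : Set X -> Set X) (gammaY : Set Y -> Set Y)
    (hopX : OperationOn gammaX) (hopY : OperationOn gammaY) (hreg : RegularOp gammaX)
    (f : X -> Y) :
    GSemiContinuous gammaX gammaY f ↔
      ∀ (x : X) (B : Set Y), GOpen gammaY B → f x ∈ B →
        ∃ A : Set X, GSemiOpen gammaX A ∧ x ∈ A ∧ f '' A ⊆ B := by
  constructor
  · intro h x B hB hx
    exact ⟨f ⁻¹' B, h B hB, hx, fun y ⟨a, ha, hay⟩ => hay ▸ ha⟩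
  · intro h B hB
    -- for each x in f ⁻¹' B choose A x
    choose A hA hxA hfA using fun x (hx : f x ∈ B) => h x B hB hx
    -- preimage is the union of the A's
    have hunion : f ⁻¹' B = ⋃ x : {x : X // f x ∈ B}, A x.1 x.2 := by
      apply Set.Subset.antisymm
      · intro x hx
        exact Set.mem_iUnion.2 ⟨⟨x, hx⟩, hxA x hx⟩
      · intro x hx
        obtain ⟨⟨y, hy⟩, hxy⟩ := Set.mem_iUnion.1 hx
        exact hfA y hy ⟨x, hxy, rfl⟩
    rw [hunion]
    -- union of γ*-semi-open sets is γ*-semi-open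
    choose O hO hOA hAcl using fun (x : {x : X // f x ∈ B}) => hA x.1 x.2
    refine ⟨⋃ x, O x, ?_, Set.iUnion_mono hOA, ?_⟩
    · -- union of γ-open is γ-open
      apply Set.Subset.antisymm
      · intro z hz
        obtain ⟨i, hzi⟩ := Set.mem_iUnion.1 hz
        have := (hO i) ▸ hzi
        obtain ⟨hzOi, N, hNopen, hzN, hγN⟩ := this
        exact ⟨hz, N, hNopen, hzN, hγN.trans (Set.subset_iUnion O i)⟩
      · intro z hz
        exact hz.1
    · intro z hz
      obtain ⟨i, hzi⟩ := Set.mem_iUnion.1 hz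
      intro U hU hzU
      obtain ⟨w, hw1, hw2⟩ := hAcl i hzi U hU hzU
      exact ⟨w, hw1, Set.mem_iUnion.2 ⟨i, hw2⟩⟩
end
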